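/- Let a : ℤ² → ℂ be the tensor-product linear B-spline filter: a(0,0) = 1/4, a(v) = 1/8 for v ∈ S₂ := {(1,0), (0,1), (−1,0), (0,−1)}, a(v) = 1/16 for v ∈ S₁ := {(1,1), (1,−1), (−1,1), (−1,−1)}, and a(v) = 0 otherwise. Define 36 high-pass filters: (1/8)(δ_γ − δ_{(0,0)}) for each γ ∈ S₁ (4 filters); (√2/8)(δ_γ − δ_{(0,0)}) for each γ ∈ S₂ (4 filters); (√2/16)(δ_{γ₁} − δ_{γ₂}) for each γ₁ ∈ S₁ and γ₂ ∈ S₂ (16 filters); (1/16)(δ_{γ₁} − δ_{γ₂}) for each unordered pair {γ₁,γ₂} of distinct elements of S₁ (6 filters); and (1/8)(δ_{γ₁} − δ_{γ₂}) for each unordered pair {γ₁,γ₂} of distinct elements of S₂ (6 filters). Then {a; b_1, …, b_{36}} is a 2-dimensional tight framelet filter bank. -/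

import Mathlib

open scoped BigOperators

/-- The Dirac filter `δ_γ` on `ℤ²`. -/
noncomputable def dirac2 (γ : Fin 2 → ℤ) : (Fin 2 → ℤ) → ℂ :=
  fun k => if k = γ then 1 else 0

/-- `{a; b_ℓ, ℓ ∈ ι}` is a 2-dimensional dyadic tight framelet filter bank. -/
def IsTFFB2 {ι : Type} [Fintype ι] (a : (Fin 2 → ℤ) → ℂ)
    (b : ι → (Fin 2 → ℤ) → ℂ) : Prop :=
  ∀ γ : Fin 2 → ℤ, (∀ i, γ i = 0 ∨ γ i = 1) → ∀ n : Fin 2 → ℤ,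
    (∑ᶠ k : Fin 2 → ℤ, a (fun i => γ i + 2 * k i) *
        (starRingEnd ℂ) (a (fun i => n i + γ i + 2 * k i))) +
      ∑ ℓ : ι, ∑ᶠ k : Fin 2 → ℤ, b ℓ (fun i => γ i + 2 * k i) *
        (starRingEnd ℂ) (b ℓ (fun i => n i + γ i + 2 * k i)) =
      (1 / 4 : ℂ) * (if n = 0 then 1 else 0)

/-- The four corner support points `S₁` of the tensor-product linear B-spline filter. -/
def eS1 : Fin 4 → (Fin 2 → ℤ) := ![![1, 1], ![1, -1], ![-1, 1], ![-1, -1]]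

/-- The four edge-midpoint support points `S₂` of the tensor-product linear B-spline
filter. -/
def eS2 : Fin 4 → (Fin 2 → ℤ) := ![![1, 0], ![0, 1], ![-1, 0], ![0, -1]]

/-- The tensor-product linear B-spline filter: `1/4` at the origin, `1/8` on `S₂`,
`1/16` on `S₁`, and `0` elsewhere. -/
noncomputable def tpLinearFilter : (Fin 2 → ℤ) → ℂ :=
  fun v =>
    if v = 0 then 1 / 4
    else if ∃ i, v = eS2 i then 1 / 8
    else if ∃ i, v = eS1 i then 1 / 16
    else 0

/-- Index type for the 36 high-pass filters: 4 + 4 + 16 + 6 + 6. -/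
abbrev TPIndex : Type :=
  Fin 4 ⊕ Fin 4 ⊕ (Fin 4 × Fin 4) ⊕ {p : Fin 4 × Fin 4 // p.1 < p.2} ⊕
    {p : Fin 4 × Fin 4 // p.1 < p.2}

/-- The 36 high-pass filters: `(1/8)(δ_γ - δ_0)` for `γ ∈ S₁`; `(√2/8)(δ_γ - δ_0)` for
`γ ∈ S₂`; `(√2/16)(δ_{γ₁} - δ_{γ₂})` for `γ₁ ∈ S₁`, `γ₂ ∈ S₂`; `(1/16)(δ_{γ₁} - δ_{γ₂})`
for unordered pairs of distinct elements of `S₁`; and `(1/8)(δ_{γ₁} - δ_{γ₂})` for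
unordered pairs of distinct elements of `S₂`. -/
noncomputable def tpLinearHighPass : TPIndex → (Fin 2 → ℤ) → ℂ
  | Sum.inl i => fun k => (1 / 8 : ℂ) * (dirac2 (eS1 i) k - dirac2 0 k)
  | Sum.inr (Sum.inl i) => fun k =>
      ((Real.sqrt 2 / 8 : ℝ) : ℂ) * (dirac2 (eS2 i) k - dirac2 0 k)
  | Sum.inr (Sum.inr (Sum.inl p)) => fun k =>
      ((Real.sqrt 2 / 16 : ℝ) : ℂ) * (dirac2 (eS1 p.1) k - dirac2 (eS2 p.2) k)
  | Sum.inr (Sum.inr (Sum.inr (Sum.inl p))) => fun k =>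
      (1 / 16 : ℂ) * (dirac2 (eS1 p.1.1) k - dirac2 (eS1 p.1.2) k)
  | Sum.inr (Sum.inr (Sum.inr (Sum.inr p))) => fun k =>
      (1 / 8 : ℂ) * (dirac2 (eS2 p.1.1) k - dirac2 (eS2 p.1.2) k)

/-!
The bank is an instance of a general construction. Let `a = ∑ᵢ wᵢ δ_{pᵢ}` with `wᵢ ≥ 0`,
`∑ wᵢ = 1`, and total weight `1/4` on each coset `γ + 2ℤ²`, and add one high-pass filter
`√(wᵢ wⱼ) (δ_{pᵢ} - δ_{pⱼ})` per unordered pair. Writing `F i j` for the polyphase correlation of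
`δ_{pᵢ}` with `δ_{pⱼ}`, the low-pass filter contributes `∑ wᵢ wⱼ F i j` and the pair filters
`∑ wᵢ wⱼ (F i i - F i j)`, so the off-diagonal terms cancel and `(∑ w) ∑ wᵢ F i i = δ(n)/4` is
left. The nine support points of the linear B-spline filter, with weights `1/4`, `1/16`, `1/8`,
satisfy these hypotheses, and their 36 pair filters are exactly the given high-pass filters.
-/

open Function Finset ComplexConjugate

noncomputable def polyCorr (γ n : Fin 2 → ℤ) (u v : (Fin 2 → ℤ) → ℂ) : ℂ :=
  ∑ᶠ k : Fin 2 → ℤ, u (fun i => γ i + 2 * k i) * conj (v (fun i => n i + γ i + 2 * k i))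

noncomputable def diracSum {ι : Type*} [Fintype ι] (p : ι → Fin 2 → ℤ) (c : ι → ℂ) :
    (Fin 2 → ℤ) → ℂ :=
  fun k => ∑ i, c i * dirac2 (p i) k

section polyCorr

variable (γ n : Fin 2 → ℤ)

theorem hasFiniteSupport_dirac_mul (α : Fin 2 → ℤ) (g : (Fin 2 → ℤ) → ℂ) :
    HasFiniteSupport fun k : Fin 2 → ℤ => dirac2 α (fun i => γ i + 2 * k i) * g k := by
  have hsub : (support fun k : Fin 2 → ℤ => dirac2 α (fun i => γ i + 2 * k i) * g k) ⊆
      {k | (fun i => γ i + 2 * k i) = α} := fun k hk => by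
    by_contra h
    exact hk (by simp [dirac2, show ¬(fun i => γ i + 2 * k i) = α from h])
  refine Set.Subsingleton.finite (Set.Subsingleton.anti ?_ hsub)
  intro k hk k' hk'
  funext i
  linarith [congrFun (hk.trans hk'.symm) i]

theorem polyCorr_dirac_left (α : Fin 2 → ℤ) (v : (Fin 2 → ℤ) → ℂ) :
    polyCorr γ n (dirac2 α) v =
      if ∀ i, 2 ∣ α i - γ i then conj (v (fun i => n i + α i)) else 0 := by
  split_ifs with hα
  · choose k hk using hα
    have hγk : (fun i => γ i + 2 * k i) = α := funext fun i => by linarith [hk i]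
    rw [polyCorr, finsum_eq_single _ k fun k' hk' => ?_]
    · rw [← hγk]
      simp [dirac2, add_assoc]
    · have : (fun i => γ i + 2 * k' i) ≠ α := fun h => hk' <| funext fun i => by
        have := congrFun h i; linarith [hk i]
      simp [dirac2, this]
  · refine finsum_eq_zero_of_forall_eq_zero fun k => ?_
    have : (fun i => γ i + 2 * k i) ≠ α := fun h => hα fun i => ⟨k i, by rw [← h]; ring⟩
    simp [dirac2, this]

theorem polyCorr_diracSum_left {ι : Type*} [Fintype ι] (p : ι → Fin 2 → ℤ) (c : ι → ℂ)
    (v : (Fin 2 → ℤ) → ℂ) :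
    polyCorr γ n (diracSum p c) v = ∑ i, c i * polyCorr γ n (dirac2 (p i)) v := by
  simp only [polyCorr, diracSum, Finset.sum_mul, mul_assoc]
  rw [finsum_sum_comm _ _ fun i _ =>
    (hasFiniteSupport_dirac_mul ..).subset (support_mul_subset_right _ _)]
  exact Finset.sum_congr rfl fun i _ => (mul_finsum' _ _ (hasFiniteSupport_dirac_mul ..)).symm

theorem polyCorr_dirac_diracSum {ι : Type*} [Fintype ι] (α : Fin 2 → ℤ) (q : ι → Fin 2 → ℤ)
    (d : ι → ℂ) :
    polyCorr γ n (dirac2 α) (diracSum q d) =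
      ∑ j, conj (d j) * polyCorr γ n (dirac2 α) (dirac2 (q j)) := by
  simp only [polyCorr_dirac_left, diracSum, map_sum, map_mul, mul_ite, mul_zero]
  split_ifs <;> simp

theorem polyCorr_diracSum {ι κ : Type*} [Fintype ι] [Fintype κ] (p : ι → Fin 2 → ℤ)
    (c : ι → ℂ) (q : κ → Fin 2 → ℤ) (d : κ → ℂ) :
    polyCorr γ n (diracSum p c) (diracSum q d) =
      ∑ i, ∑ j, c i * conj (d j) * polyCorr γ n (dirac2 (p i)) (dirac2 (q j)) := by
  simp only [polyCorr_diracSum_left, polyCorr_dirac_diracSum, Finset.mul_sum, mul_assoc]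

theorem polyCorr_dirac_self (α : Fin 2 → ℤ) :
    polyCorr γ n (dirac2 α) (dirac2 α) = if (∀ i, 2 ∣ α i - γ i) ∧ n = 0 then 1 else 0 := by
  have hn : (fun i => n i + α i) = α ↔ n = 0 := by
    simp only [funext_iff, add_eq_right, Pi.zero_apply]
  simp [polyCorr_dirac_left, dirac2, hn, ite_and]

theorem polyCorr_smul_dirac_sub (c : ℂ) (x y : Fin 2 → ℤ) :
    polyCorr γ n (fun k => c * (dirac2 x k - dirac2 y k))
        (fun k => c * (dirac2 x k - dirac2 y k)) =
      c * conj c * (polyCorr γ n (dirac2 x) (dirac2 x) - polyCorr γ n (dirac2 x) (dirac2 y) -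
        polyCorr γ n (dirac2 y) (dirac2 x) + polyCorr γ n (dirac2 y) (dirac2 y)) := by
  have h : (fun k => c * (dirac2 x k - dirac2 y k)) = diracSum ![x, y] ![c, -c] := by
    funext k
    simp only [diracSum, Fin.sum_univ_two, Matrix.cons_val_zero, Matrix.cons_val_one]
    ring
  rw [h, polyCorr_diracSum]
  simp only [Fin.sum_univ_two, Matrix.cons_val_zero, Matrix.cons_val_one, map_neg]
  ring

end polyCorr

theorem isTFFB2_iff {ι : Type} [Fintype ι] (a : (Fin 2 → ℤ) → ℂ) (b : ι → (Fin 2 → ℤ) → ℂ) :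
    IsTFFB2 a b ↔ ∀ γ : Fin 2 → ℤ, (∀ i, γ i = 0 ∨ γ i = 1) → ∀ n : Fin 2 → ℤ,
      polyCorr γ n a a + ∑ ℓ, polyCorr γ n (b ℓ) (b ℓ) = 1 / 4 * if n = 0 then 1 else 0 :=
  Iff.rfl

-- Indexed by ordered pairs: `(i, j)` and `(j, i)` together play the role of one unordered pair.
noncomputable def haarHighPass {ι : Type*} (p : ι → Fin 2 → ℤ) (w : ι → ℝ) (m : ι × ι) :
    (Fin 2 → ℤ) → ℂ :=
  fun k => (√(w m.1 * w m.2 / 2) : ℂ) * (dirac2 (p m.1) k - dirac2 (p m.2) k)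

theorem polyCorr_haarHighPass {ι : Type*} (p : ι → Fin 2 → ℤ) {w : ι → ℝ} (hw : ∀ i, 0 ≤ w i)
    (γ n : Fin 2 → ℤ) (i j : ι) :
    polyCorr γ n (haarHighPass p w (i, j)) (haarHighPass p w (i, j)) =
      (w i * w j / 2 : ℂ) * (polyCorr γ n (dirac2 (p i)) (dirac2 (p i)) -
        polyCorr γ n (dirac2 (p i)) (dirac2 (p j)) - polyCorr γ n (dirac2 (p j)) (dirac2 (p i)) +
        polyCorr γ n (dirac2 (p j)) (dirac2 (p j))) := by
  have hw2 : 0 ≤ w i * w j / 2 := by have := hw i; have := hw j; positivity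
  unfold haarHighPass
  rw [polyCorr_smul_dirac_sub, Complex.conj_ofReal, ← Complex.ofReal_mul,
    Real.mul_self_sqrt hw2]
  push_cast
  rfl

theorem sum_polyCorr_haarHighPass {ι : Type*} [Fintype ι] (p : ι → Fin 2 → ℤ) {w : ι → ℝ}
    (hw : ∀ i, 0 ≤ w i) (γ n : Fin 2 → ℤ) :
    ∑ m, polyCorr γ n (haarHighPass p w m) (haarHighPass p w m) =
      ∑ i, ∑ j, (w i * w j : ℂ) * (polyCorr γ n (dirac2 (p i)) (dirac2 (p i)) -
        polyCorr γ n (dirac2 (p i)) (dirac2 (p j))) := by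
  let F : ι → ι → ℂ := fun i j => polyCorr γ n (dirac2 (p i)) (dirac2 (p j))
  show _ = ∑ i, ∑ j, (w i * w j : ℂ) * (F i i - F i j)
  have hswap : ∑ i, ∑ j, (w i * w j : ℂ) * (F j j - F j i) =
      ∑ i, ∑ j, (w i * w j : ℂ) * (F i i - F i j) := by
    rw [Finset.sum_comm]
    exact Finset.sum_congr rfl fun i _ => Finset.sum_congr rfl fun j _ => by ring
  calc _ = ∑ i, ∑ j, (w i * w j / 2 : ℂ) * (F i i - F i j - F j i + F j j) := by
        rw [Fintype.sum_prod_type]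
        exact Finset.sum_congr rfl fun i _ => Finset.sum_congr rfl fun j _ =>
          polyCorr_haarHighPass p hw γ n i j
    _ = (∑ i, ∑ j, (w i * w j : ℂ) * (F i i - F i j) +
          ∑ i, ∑ j, (w i * w j : ℂ) * (F j j - F j i)) / 2 := by
        simp only [← Finset.sum_add_distrib, Finset.sum_div]
        exact Finset.sum_congr rfl fun i _ => Finset.sum_congr rfl fun j _ => by ring
    _ = _ := by rw [hswap, add_self_div_two]

theorem isTFFB2_diracSum_haarHighPass {ι : Type} [Fintype ι] (p : ι → Fin 2 → ℤ) (w : ι → ℝ)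
    (hw : ∀ i, 0 ≤ w i) (hsum : ∑ i, w i = 1)
    (hcoset : ∀ γ : Fin 2 → ℤ, (∀ i, γ i = 0 ∨ γ i = 1) →
      ∑ i with ∀ j, 2 ∣ p i j - γ j, w i = 1 / 4) :
    IsTFFB2 (diracSum p fun i => (w i : ℂ)) (haarHighPass p w) := by
  rw [isTFFB2_iff]
  intro γ hγ n
  let F : ι → ι → ℂ := fun i j => polyCorr γ n (dirac2 (p i)) (dirac2 (p j))
  have hlow : polyCorr γ n (diracSum p fun i => (w i : ℂ)) (diracSum p fun i => (w i : ℂ)) =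
      ∑ i, ∑ j, (w i * w j : ℂ) * F i j := by
    simp only [polyCorr_diracSum, Complex.conj_ofReal, F]
  have hhigh := sum_polyCorr_haarHighPass p hw γ n
  have hdiag : ∀ i, F i i = if (∀ j, 2 ∣ p i j - γ j) ∧ n = 0 then 1 else 0 := fun i =>
    polyCorr_dirac_self γ n (p i)
  calc _ = ∑ i, ∑ j, (w i * w j : ℂ) * F i i := by
        rw [hlow, hhigh, ← Finset.sum_add_distrib]
        refine Finset.sum_congr rfl fun i _ => ?_
        rw [← Finset.sum_add_distrib]
        exact Finset.sum_congr rfl fun j _ => by ring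
    _ = ∑ i, (w i : ℂ) * F i i := by
        refine Finset.sum_congr rfl fun i _ => ?_
        rw [← Finset.sum_mul, ← Finset.mul_sum, ← Complex.ofReal_sum, hsum, Complex.ofReal_one,
          mul_one]
    _ = _ := by
        by_cases hn : n = 0
        · simp only [hdiag, hn, and_true, if_true, mul_one, mul_ite, mul_zero, ← Finset.sum_filter]
          rw [← Complex.ofReal_sum, hcoset γ hγ]
          push_cast; ring
        · simp [hdiag, hn]

def tpPoints : Unit ⊕ Fin 4 ⊕ Fin 4 → Fin 2 → ℤ := Sum.elim (fun _ => 0) (Sum.elim eS1 eS2)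

noncomputable def tpWeights : Unit ⊕ Fin 4 ⊕ Fin 4 → ℝ :=
  Sum.elim (fun _ => 1 / 4) (Sum.elim (fun _ => 1 / 16) (fun _ => 1 / 8))

theorem tpLinearFilter_eq_diracSum :
    tpLinearFilter = diracSum tpPoints fun i => (tpWeights i : ℂ) := by
  have hS1 : Injective eS1 := by decide
  have hS2 : Injective eS2 := by decide
  have hS1_ne : ∀ i, eS1 i ≠ 0 := by decide
  have hS2_ne : ∀ i, eS2 i ≠ 0 := by decide
  have hS12 : ∀ i j, eS1 i ≠ eS2 j := by decide
  funext x
  simp only [diracSum, Fintype.sum_sum_type, tpPoints, tpWeights, Sum.elim_inl, Sum.elim_inr,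
    Fintype.sum_unique, dirac2, tpLinearFilter]
  split_ifs with h0 h2 h1
  · subst h0
    simp [hS1_ne, hS2_ne, eq_comm]
  · obtain ⟨i, rfl⟩ := h2
    simp [hS2_ne, hS2.eq_iff, (hS12 _ _).symm]
  · obtain ⟨i, rfl⟩ := h1
    simp [hS1_ne, hS1.eq_iff, hS12]
  · simp only [not_exists] at h2 h1
    simp [h0, h2, h1]

theorem tpWeights_nonneg (i : Unit ⊕ Fin 4 ⊕ Fin 4) : 0 ≤ tpWeights i := by
  rcases i with _ | _ | _ <;> norm_num [tpWeights]

theorem tpWeights_sum : ∑ i, tpWeights i = 1 := by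
  simp only [Fintype.sum_sum_type, tpWeights, Sum.elim_inl, Sum.elim_inr, Fintype.sum_unique,
    Fin.sum_univ_four]
  norm_num

theorem tpWeights_sum_coset (γ : Fin 2 → ℤ) (hγ : ∀ i, γ i = 0 ∨ γ i = 1) :
    ∑ i with ∀ j, 2 ∣ tpPoints i j - γ j, tpWeights i = 1 / 4 := by
  rw [Finset.sum_filter]
  simp only [Fintype.sum_sum_type, tpPoints, tpWeights, Sum.elim_inl, Sum.elim_inr,
    Fintype.sum_unique, Fin.sum_univ_four, Fin.forall_fin_two]
  rcases hγ 0 with h0 | h0 <;> rcases hγ 1 with h1 | h1 <;>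
    norm_num [h0, h1, eS1, eS2, Matrix.cons_val_two, Matrix.cons_val_three]

theorem ofReal_sqrt_two_div_mul_conj (d : ℝ) :
    ((√2 / d : ℝ) : ℂ) * conj ((√2 / d : ℝ) : ℂ) = 2 / d ^ 2 := by
  rw [Complex.conj_ofReal, ← Complex.ofReal_mul, div_mul_div_comm,
    Real.mul_self_sqrt zero_le_two]
  push_cast
  ring

theorem sum_subtype_lt_fin_four {M : Type*} [AddCommMonoid M]
    (g : {p : Fin 4 × Fin 4 // p.1 < p.2} → M) :
    ∑ p, g p = g ⟨(0, 1), by decide⟩ + g ⟨(0, 2), by decide⟩ + g ⟨(0, 3), by decide⟩ +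
      g ⟨(1, 2), by decide⟩ + g ⟨(1, 3), by decide⟩ + g ⟨(2, 3), by decide⟩ := by
  rw [show (univ : Finset {p : Fin 4 × Fin 4 // p.1 < p.2}) =
    {⟨(0, 1), by decide⟩, ⟨(0, 2), by decide⟩, ⟨(0, 3), by decide⟩, ⟨(1, 2), by decide⟩,
      ⟨(1, 3), by decide⟩, ⟨(2, 3), by decide⟩} by decide]
  simp [add_assoc]

theorem sum_polyCorr_tpLinearHighPass (γ n : Fin 2 → ℤ) :
    ∑ ℓ, polyCorr γ n (tpLinearHighPass ℓ) (tpLinearHighPass ℓ) =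
      ∑ m, polyCorr γ n (haarHighPass tpPoints tpWeights m)
        (haarHighPass tpPoints tpWeights m) := by
  -- Both sides become combinations of the correlations of `δ_0`, `δ_{eS1 i}`, `δ_{eS2 i}`,
  -- which `ring` treats as atoms.
  simp only [Fintype.sum_prod_type, polyCorr_haarHighPass tpPoints tpWeights_nonneg]
  simp only [Fintype.sum_sum_type, tpLinearHighPass, polyCorr_smul_dirac_sub,
    sum_subtype_lt_fin_four, Fintype.sum_prod_type, Fin.sum_univ_four,
    Fintype.sum_unique, tpPoints, tpWeights, Sum.elim_inl, Sum.elim_inr,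
    ofReal_sqrt_two_div_mul_conj, map_div₀, map_one, map_ofNat]
  push_cast
  ring

/-- The tensor-product linear B-spline filter together with the 36 two-coefficient
high-pass filters forms a 2-dimensional tight framelet filter bank. -/
theorem tpLinear_tffb :
    Fintype.card TPIndex = 36 ∧ IsTFFB2 tpLinearFilter tpLinearHighPass := by
  refine ⟨by decide, ?_⟩
  have hHaar := isTFFB2_diracSum_haarHighPass tpPoints tpWeights tpWeights_nonneg tpWeights_sum
    tpWeights_sum_coset
  rw [isTFFB2_iff] at hHaar ⊢
  intro γ hγ n
  rw [tpLinearFilter_eq_diracSum, sum_polyCorr_tpLinearHighPass]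
  exact hHaar γ hγ n
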